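/- arXiv:1404.3884 — 2 statements merged into one kernel-verified Lean document; each statement's English description precedes it below -/
import Mathlib

section
/- Let V, H₁ be self-adjoint operators, w, z vectors of operators satisfying the sector bound w†w ≤ (1/γ²)z†z + δ for real γ > 0, δ ≥ 0, and let H₂ be a self-adjoint operator satisfying the commutator decomposition [V,H₂] = [V,z†]w - w†[z,V]. Define 𝒢(V) = -i[V, H₁+H₂] + ℒ(V) where ℒ(V) = ½L†[V,L] + ½[L†,V]L for a coupling vector L. Then for any real τ > 0, 𝒢(V) ≤ -i[V,H₁] + ℒ(V) + τ²[V,z†][z,V] + (1/(γ²τ²))z†z + δ/τ². -/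
/-!
Completing the square. For `a = [V, zᵢ†]` (so `a† = [zᵢ, V]` since `V` is self-adjoint) and
`M = τ a - (i/τ) wᵢ†` one has `0 ≤ M M† = τ² a a† + i (a wᵢ - wᵢ† a†) + τ⁻² wᵢ† wᵢ`.
Summed over `i`, the commutator decomposition turns the cross terms into `i [V, H₂]`, so
`-i [V, H₂] ≤ τ² ∑ [V, z†][z, V] + τ⁻² ∑ w† w`, and the sector bound controls the last sum.
-/

open ContinuousLinearMap Complex

section StarAlgebra

variable {A : Type*} [Ring A] [StarRing A]

theorem IsSelfAdjoint.star_commutator_star {V : A} (hV : IsSelfAdjoint V) (z : A) :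
    star (V * star z - star z * V) = z * V - V * z := by
  simp only [star_sub, star_mul, star_star, hV.star_eq]

variable [PartialOrder A] [StarOrderedRing A]
  [Module ℂ A] [StarModule ℂ A] [IsScalarTower ℂ A A] [SMulCommClass ℂ A A]
  [Module ℝ A] [IsScalarTower ℝ ℂ A]

theorem I_smul_sub_le_smul_add_smul (a w : A) {t : ℝ} (ht : t ≠ 0) :
    I • (star w * star a - a * w) ≤ t ^ 2 • (a * star a) + (t ^ 2)⁻¹ • (star w * w) := by
  set M := (t : ℂ) • a - (I / t) • star w
  have ht' : (t : ℂ) ≠ 0 := ofReal_ne_zero.mpr ht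
  have hM : t ^ 2 • (a * star a) + (t ^ 2)⁻¹ • (star w * w) - I • (star w * star a - a * w)
      = M * star M := by
    simp only [M, star_sub, star_smul, star_star, sub_mul, mul_sub, smul_mul_assoc, mul_smul_comm,
      Complex.star_def, map_div₀, conj_ofReal, conj_I]
    match_scalars <;> field_simp <;> ring_nf <;> simp [I_sq, ht']
  exact sub_nonneg.mp (hM ▸ mul_star_self_nonneg M)

theorem neg_I_smul_commutator_le {m : ℕ} {V K : A} (hV : IsSelfAdjoint V) (w z : Fin m → A)
    (hK : V * K - K * V
        = ∑ i, (V * star (z i) - star (z i) * V) * w i - ∑ i, star (w i) * (z i * V - V * z i))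
    {t : ℝ} (ht : t ≠ 0) :
    -I • (V * K - K * V) ≤ t ^ 2 • ∑ i, (V * star (z i) - star (z i) * V) * (z i * V - V * z i)
      + (t ^ 2)⁻¹ • ∑ i, star (w i) * w i := by
  calc -I • (V * K - K * V)
      = ∑ i, I • (star (w i) * star (V * star (z i) - star (z i) * V)
          - (V * star (z i) - star (z i) * V) * w i) := by
        simp only [hK, hV.star_commutator_star, ← Finset.sum_sub_distrib, Finset.smul_sum,
          neg_smul, ← smul_neg, neg_sub]
    _ ≤ _ := by
      simp only [Finset.smul_sum, ← Finset.sum_add_distrib, ← hV.star_commutator_star]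
      exact Finset.sum_le_sum fun i _ => I_smul_sub_le_smul_add_smul _ _ ht

end StarAlgebra

theorem stmt_2_general {H : Type*} [NormedAddCommGroup H] [InnerProductSpace ℂ H] [CompleteSpace H]
    {m p : ℕ} (w z : Fin m → H →L[ℂ] H) (L : Fin p → H →L[ℂ] H)
    (V H₁ H₂ : H →L[ℂ] H)
    (hV : IsSelfAdjoint V)
    (γ δ τ : ℝ) (hτ : 0 < τ)
    (hsector : ((γ^2)⁻¹ • ∑ i, adjoint (z i) * z i + δ • (1 : H →L[ℂ] H)
        - ∑ i, adjoint (w i) * w i).IsPositive)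
    (hdecomp : V * H₂ - H₂ * V
        = ∑ i, (V * adjoint (z i) - adjoint (z i) * V) * w i
          - ∑ i, adjoint (w i) * (z i * V - V * z i)) :
    ((-Complex.I • (V * H₁ - H₁ * V)
        + ((1/2 : ℂ) • ∑ k, adjoint (L k) * (V * L k - L k * V)
          + (1/2 : ℂ) • ∑ k, (adjoint (L k) * V - V * adjoint (L k)) * L k)
        + (τ^2 : ℝ) • ∑ i, (V * adjoint (z i) - adjoint (z i) * V) * (z i * V - V * z i)
        + ((γ^2 * τ^2 : ℝ)⁻¹) • ∑ i, adjoint (z i) * z i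
        + (δ / τ^2 : ℝ) • (1 : H →L[ℂ] H))
      - (-Complex.I • (V * (H₁ + H₂) - (H₁ + H₂) * V)
        + ((1/2 : ℂ) • ∑ k, adjoint (L k) * (V * L k - L k * V)
          + (1/2 : ℂ) • ∑ k, (adjoint (L k) * V - V * adjoint (L k)) * L k))).IsPositive := by
  simp only [← star_eq_adjoint] at hsector hdecomp ⊢
  have hcross := neg_I_smul_commutator_le hV w z hdecomp hτ.ne'
  have hw : ∑ i, star (w i) * w i ≤ (γ ^ 2)⁻¹ • ∑ i, star (z i) * z i + δ • (1 : H →L[ℂ] H) :=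
    hsector
  have key := hcross.trans <|
    add_le_add_right (smul_le_smul_of_nonneg_left hw (inv_nonneg.mpr (sq_nonneg τ))) _
  rw [← nonneg_iff_isPositive]
  refine (sub_nonneg.mpr key).trans_eq ?_
  simp only [mul_add, add_mul]
  module

/-- The central estimate in the proof of Lemma 4 of the paper:
bound on the generator `𝒢(V)` under a sector-bounded quadratic perturbation. -/
theorem stmt_2 {H : Type*} [NormedAddCommGroup H] [InnerProductSpace ℂ H] [CompleteSpace H]
    {m p : ℕ} (w z : Fin m → H →L[ℂ] H) (L : Fin p → H →L[ℂ] H)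
    (V H₁ H₂ : H →L[ℂ] H)
    (hV : IsSelfAdjoint V) (hH₁ : IsSelfAdjoint H₁) (hH₂ : IsSelfAdjoint H₂)
    (γ δ τ : ℝ) (hγ : 0 < γ) (hδ : 0 ≤ δ) (hτ : 0 < τ)
    (hsector : ((γ^2)⁻¹ • ∑ i, adjoint (z i) * z i + δ • (1 : H →L[ℂ] H)
        - ∑ i, adjoint (w i) * w i).IsPositive)
    (hdecomp : V * H₂ - H₂ * V
        = ∑ i, (V * adjoint (z i) - adjoint (z i) * V) * w i
          - ∑ i, adjoint (w i) * (z i * V - V * z i)) :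
    ((-Complex.I • (V * H₁ - H₁ * V)
        + ((1/2 : ℂ) • ∑ k, adjoint (L k) * (V * L k - L k * V)
          + (1/2 : ℂ) • ∑ k, (adjoint (L k) * V - V * adjoint (L k)) * L k)
        + (τ^2 : ℝ) • ∑ i, (V * adjoint (z i) - adjoint (z i) * V) * (z i * V - V * z i)
        + ((γ^2 * τ^2 : ℝ)⁻¹) • ∑ i, adjoint (z i) * z i
        + (δ / τ^2 : ℝ) • (1 : H →L[ℂ] H))
      - (-Complex.I • (V * (H₁ + H₂) - (H₁ + H₂) * V)
        + ((1/2 : ℂ) • ∑ k, adjoint (L k) * (V * L k - L k * V)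
          + (1/2 : ℂ) • ∑ k, (adjoint (L k) * V - V * adjoint (L k)) * L k))).IsPositive :=
  stmt_2_general w z L V H₁ H₂ hV γ δ τ hτ hsector hdecomp
end

section
/- Let w₁, w₂, z be scalar operators, V a self-adjoint operator, and μ = [z,[V,z]]. Suppose w₁w₁* ≤ (1/γ²)zz* + δ₁ and w₂w₂* ≤ δ₂ for reals γ > 0, δ₁, δ₂ ≥ 0, and [V,H₂] = [V,z]w₁* - w₁[z*,V] + ½μ w₂* - ½ w₂ μ* for a self-adjoint operator H₂. Then for any τ > 0: -i[V,H₂] ≤ τ²[V,z][z*,V] + (1/(γ²τ²))zz* + δ₁/τ² + ¼μμ* + δ₂. -/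
/-!
Both cross terms of `-i[V, H₂]` are controlled by the operator Young inequality
`-i (X W† - W X†) ≤ t² X X† + t⁻² W W†`, applied to `(X, W, t) = ([V, z], w₁, τ)` and to
`(μ / 2, w₂, 1)`; the bounds on `w₁ w₁†` and `w₂ w₂†` then give the claim.
-/

open ContinuousLinearMap

namespace ContinuousLinearMap

variable {H : Type*} [NormedAddCommGroup H] [InnerProductSpace ℂ H] [CompleteSpace H]

/-- Expand `0 ≤ (t X - (i / t) W) (t X - (i / t) W)†`. -/
theorem neg_I_smul_sub_le_add (X W : H →L[ℂ] H) {t : ℝ} (ht : t ≠ 0) :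
    -Complex.I • (X * adjoint W - W * adjoint X)
      ≤ t ^ 2 • (X * adjoint X) + (t ^ 2)⁻¹ • (W * adjoint W) := by
  have hsq := mul_star_self_nonneg ((t : ℂ) • X - (Complex.I / t) • W)
  have ht' : (t : ℂ) ≠ 0 := by exact_mod_cast ht
  rw [← sub_nonneg]
  convert hsq using 1
  simp only [star_eq_adjoint, map_sub, map_smulₛₗ, sub_mul, mul_sub, smul_mul_assoc,
    mul_smul_comm, Complex.conj_ofReal, map_div₀, Complex.conj_I]
  match_scalars <;> field_simp <;> simp [ht']

end ContinuousLinearMap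

theorem stmt_3_general {H : Type*} [NormedAddCommGroup H] [InnerProductSpace ℂ H] [CompleteSpace H]
    (w₁ w₂ z V H₂ μ : H →L[ℂ] H)
    (hV : IsSelfAdjoint V)
    (γ δ₁ δ₂ τ : ℝ) (hτ : 0 < τ)
    (hsector₁ : ((γ^2)⁻¹ • (z * adjoint z) + δ₁ • (1 : H →L[ℂ] H)
        - w₁ * adjoint w₁).IsPositive)
    (hsector₂ : (δ₂ • (1 : H →L[ℂ] H) - w₂ * adjoint w₂).IsPositive)
    (hdecomp : V * H₂ - H₂ * V
        = (V * z - z * V) * adjoint w₁ - w₁ * (adjoint z * V - V * adjoint z)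
          + (1/2 : ℂ) • (μ * adjoint w₂) - (1/2 : ℂ) • (w₂ * adjoint μ)) :
    (((τ^2 : ℝ) • ((V * z - z * V) * (adjoint z * V - V * adjoint z))
        + ((γ^2 * τ^2 : ℝ)⁻¹) • (z * adjoint z)
        + (δ₁ / τ^2 : ℝ) • (1 : H →L[ℂ] H)
        + (1/4 : ℝ) • (μ * adjoint μ)
        + δ₂ • (1 : H →L[ℂ] H))
      - (-Complex.I • (V * H₂ - H₂ * V))).IsPositive := by
  set X := V * z - z * V
  set μ' := (1 / 2 : ℂ) • μ
  have hX : adjoint X = adjoint z * V - V * adjoint z := by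
    simp [X, ← star_eq_adjoint, hV.star_eq]
  have hμ' : adjoint μ' = (1 / 2 : ℂ) • adjoint μ := by
    simp [μ', ← star_eq_adjoint, star_smul]
  rw [← le_def, hdecomp, ← hX]
  calc -Complex.I • (X * adjoint w₁ - w₁ * adjoint X
          + (1 / 2 : ℂ) • (μ * adjoint w₂) - (1 / 2 : ℂ) • (w₂ * adjoint μ))
      = -Complex.I • (X * adjoint w₁ - w₁ * adjoint X)
          + -Complex.I • (μ' * adjoint w₂ - w₂ * adjoint μ') := by
        rw [hμ', smul_mul_assoc, mul_smul_comm]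
        module
    _ ≤ (τ ^ 2 • (X * adjoint X) + (τ ^ 2)⁻¹ • (w₁ * adjoint w₁))
          + ((1 : ℝ) ^ 2 • (μ' * adjoint μ') + ((1 : ℝ) ^ 2)⁻¹ • (w₂ * adjoint w₂)) :=
        add_le_add (neg_I_smul_sub_le_add _ _ hτ.ne') (neg_I_smul_sub_le_add _ _ one_ne_zero)
    _ ≤ (τ ^ 2 • (X * adjoint X) + (τ ^ 2)⁻¹ • ((γ ^ 2)⁻¹ • (z * adjoint z) + δ₁ • 1))
          + ((1 : ℝ) ^ 2 • (μ' * adjoint μ') + ((1 : ℝ) ^ 2)⁻¹ • (δ₂ • 1)) := by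
        gcongr
        · exact (le_def _ _).2 hsector₁
        · exact (le_def _ _).2 hsector₂
    _ = _ := by
        rw [hμ', smul_mul_assoc, mul_smul_comm, smul_smul]
        match_scalars <;> field_simp
        norm_num

/-- Combination of inequalities (64)-(67) in the proof of Lemma 7
(non-quadratic Hamiltonian perturbations) of the paper. -/
theorem stmt_3 {H : Type*} [NormedAddCommGroup H] [InnerProductSpace ℂ H] [CompleteSpace H]
    (w₁ w₂ z V H₂ μ : H →L[ℂ] H)
    (hV : IsSelfAdjoint V) (hH₂ : IsSelfAdjoint H₂)
    (hμ : μ = z * (V * z - z * V) - (V * z - z * V) * z)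
    (γ δ₁ δ₂ τ : ℝ) (hγ : 0 < γ) (hδ₁ : 0 ≤ δ₁) (hδ₂ : 0 ≤ δ₂) (hτ : 0 < τ)
    (hsector₁ : ((γ^2)⁻¹ • (z * adjoint z) + δ₁ • (1 : H →L[ℂ] H)
        - w₁ * adjoint w₁).IsPositive)
    (hsector₂ : (δ₂ • (1 : H →L[ℂ] H) - w₂ * adjoint w₂).IsPositive)
    (hdecomp : V * H₂ - H₂ * V
        = (V * z - z * V) * adjoint w₁ - w₁ * (adjoint z * V - V * adjoint z)
          + (1/2 : ℂ) • (μ * adjoint w₂) - (1/2 : ℂ) • (w₂ * adjoint μ)) :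
    (((τ^2 : ℝ) • ((V * z - z * V) * (adjoint z * V - V * adjoint z))
        + ((γ^2 * τ^2 : ℝ)⁻¹) • (z * adjoint z)
        + (δ₁ / τ^2 : ℝ) • (1 : H →L[ℂ] H)
        + (1/4 : ℝ) • (μ * adjoint μ)
        + δ₂ • (1 : H →L[ℂ] H))
      - (-Complex.I • (V * H₂ - H₂ * V))).IsPositive :=
  stmt_3_general w₁ w₂ z V H₂ μ hV γ δ₁ δ₂ τ hτ hsector₁ hsector₂ hdecomp
end
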